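/- Let (X, d) be a metric space with Borel measure μ, z ∈ X, n ≥ 1 an integer, and V, Λ > 0 constants such that μ(B(z, ρ)) ≤ V ρⁿ e^{Λρ} for all ρ > 0. Then for every a ≥ 8, k ∈ {0, 1, 2}, and r ∈ (0, 1], one has ∫_X exp(−a d(z,x)²/r²) · exp(d(z,x)²) · d(z,x)^k dμ(x) ≤ C' r^{n+k}, where C' depends only on n, k, a, V, Λ. -/

import Mathlib

/-!
Split `X` into the ball `B(z, r)` and the dyadic annuli `2^j r ≤ d(z, x) < 2^(j+1) r`. As `r ≤ 1`
and `a ≥ 2`, the weight `e^{d²}` eats at most half of the Gaussian, so the integrand is at most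
`r^k` on the ball and `e^{-(a/2) 4^j} (2^(j+1) r)^k` on the `j`-th annulus. Against the volume
bound `V (2^(j+1) r)^n e^{2^(j+1) Λ}` of that annulus, the Gaussian `e^{-4·4^j}` (here `a ≥ 8`
enters) still wins by a factor `2^(-j)`, so the annuli contribute a geometric series of
multiples of `r^(n+k)`.
-/

open MeasureTheory Metric Real
open scoped ENNReal

lemma lintegral_restrict_le_mul_measure {α : Type*} [MeasurableSpace α] (μ : Measure α)
    {s : Set α} {f : α → ℝ≥0∞} {c : ℝ≥0∞} (hf : ∀ x ∈ s, f x ≤ c) :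
    ∫⁻ x in s, f x ∂μ ≤ c * μ s := by
  rw [← iSup_lintegral_measurable_le_eq_lintegral]
  refine iSup₂_le fun g hg => iSup_le fun hgf => ?_
  -- `s` need not be measurable, but `{c < g}` is, and it misses `s`.
  have hgc : ∀ᵐ x ∂μ.restrict s, g x ≤ c := by
    have hdisj : {x | c < g x} ∩ s = ∅ :=
      Set.eq_empty_of_forall_notMem fun x ⟨hlt, hx⟩ => ((hgf x).trans (hf x hx)).not_gt hlt
    simp only [ae_iff, not_le]
    rw [Measure.restrict_apply (measurableSet_lt measurable_const hg), hdisj, measure_empty]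
  calc ∫⁻ x, g x ∂μ.restrict s ≤ ∫⁻ _, c ∂μ.restrict s := lintegral_mono_ae hgc
    _ = c * μ s := setLIntegral_const s c

section DyadicDecomposition

variable {X : Type*} [PseudoMetricSpace X] [MeasurableSpace X] (μ : Measure X) (z : X) {r : ℝ}

lemma le_restrict_ball_add_sum_restrict_annulus (hr : 0 < r) :
    μ ≤ μ.restrict (ball z r) +
      Measure.sum fun j : ℕ => μ.restrict (ball z (2 ^ (j + 1) * r) \ ball z (2 ^ j * r)) := by
  have hcover : Set.univ ⊆ ball z r ∪ ⋃ j : ℕ, (ball z (2 ^ (j + 1) * r) \ ball z (2 ^ j * r)) := by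
    intro x _
    rcases lt_or_ge (dist z x) r with hx | hx
    · exact .inl (mem_ball'.2 hx)
    obtain ⟨j, hj, hj'⟩ := exists_nat_pow_near ((one_le_div hr).2 hx) one_lt_two
    refine .inr (Set.mem_iUnion.2 ⟨j, mem_ball'.2 ?_, fun h => (mem_ball'.1 h).not_ge ?_⟩)
    · rwa [div_lt_iff₀ hr] at hj'
    · rwa [le_div_iff₀ hr] at hj
  calc μ = μ.restrict Set.univ := Measure.restrict_univ.symm
    _ ≤ μ.restrict (ball z r ∪ ⋃ j : ℕ, (ball z (2 ^ (j + 1) * r) \ ball z (2 ^ j * r))) :=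
      Measure.restrict_mono hcover le_rfl
    _ ≤ _ := (Measure.restrict_union_le _ _).trans (add_le_add le_rfl Measure.restrict_iUnion_le)

lemma lintegral_le_ball_add_tsum_annulus (hr : 0 < r) {f : X → ℝ≥0∞} {c₀ : ℝ≥0∞}
    {c : ℕ → ℝ≥0∞} (h₀ : ∀ x, dist z x < r → f x ≤ c₀)
    (hc : ∀ j x, 2 ^ j * r ≤ dist z x → dist z x < 2 ^ (j + 1) * r → f x ≤ c j) :
    ∫⁻ x, f x ∂μ ≤ c₀ * μ (ball z r) + ∑' j : ℕ, c j * μ (ball z (2 ^ (j + 1) * r)) := by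
  calc ∫⁻ x, f x ∂μ
      ≤ ∫⁻ x, f x ∂(μ.restrict (ball z r) + Measure.sum fun j : ℕ =>
          μ.restrict (ball z (2 ^ (j + 1) * r) \ ball z (2 ^ j * r))) :=
        lintegral_mono' (le_restrict_ball_add_sum_restrict_annulus μ z hr) le_rfl
    _ = ∫⁻ x in ball z r, f x ∂μ +
          ∑' j : ℕ, ∫⁻ x in ball z (2 ^ (j + 1) * r) \ ball z (2 ^ j * r), f x ∂μ := by
        rw [lintegral_add_measure, lintegral_sum_measure]
    _ ≤ _ := by
        refine add_le_add (lintegral_restrict_le_mul_measure μ fun x hx => h₀ x (mem_ball'.1 hx))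
          (ENNReal.tsum_le_tsum fun j => ?_)
        refine (lintegral_restrict_le_mul_measure μ fun x hx => ?_).trans
          (mul_le_mul_right (measure_mono Set.sdiff_subset) _)
        exact hc j x (not_lt.1 fun h => hx.2 (mem_ball'.2 h)) (mem_ball'.1 hx.1)

end DyadicDecomposition

lemma exp_neg_mul_sq_div_sq_mul_exp_sq_le {a r : ℝ} (t : ℝ) (ha : 2 ≤ a) (hr : 0 < r)
    (hr1 : r ≤ 1) : exp (-(a * t ^ 2 / r ^ 2)) * exp (t ^ 2) ≤ exp (-(a / 2 * (t / r) ^ 2)) := by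
  rw [← exp_add, exp_le_exp, div_pow, mul_div_assoc]
  have ht : t ^ 2 ≤ t ^ 2 / r ^ 2 :=
    le_div_self (sq_nonneg t) (by positivity) (pow_le_one₀ hr.le hr1)
  have hu : 0 ≤ t ^ 2 / r ^ 2 := by positivity
  nlinarith

lemma gaussian_weight_le_of_le {a r t : ℝ} (k : ℕ) (ha : 2 ≤ a) (hr : 0 < r) (hr1 : r ≤ 1)
    (ht : 0 ≤ t) (htr : t ≤ r) :
    exp (-(a * t ^ 2 / r ^ 2)) * exp (t ^ 2) * t ^ k ≤ r ^ k := by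
  have hexp : exp (-(a * t ^ 2 / r ^ 2)) * exp (t ^ 2) ≤ 1 :=
    (exp_neg_mul_sq_div_sq_mul_exp_sq_le t ha hr hr1).trans
      (exp_le_one_iff.2 (by have := sq_nonneg (t / r); nlinarith))
  simpa using mul_le_mul hexp (pow_le_pow_left₀ ht htr k) (by positivity) zero_le_one

lemma gaussian_weight_le_of_mem_annulus {a r t : ℝ} (k j : ℕ) (ha : 2 ≤ a) (hr : 0 < r)
    (hr1 : r ≤ 1) (ht : 2 ^ j * r ≤ t) (ht' : t ≤ 2 ^ (j + 1) * r) :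
    exp (-(a * t ^ 2 / r ^ 2)) * exp (t ^ 2) * t ^ k ≤
      exp (-(a / 2 * 4 ^ j)) * (2 ^ (j + 1) * r) ^ k := by
  have h4 : (4 : ℝ) ^ j ≤ (t / r) ^ 2 := by
    rw [show (4 : ℝ) ^ j = (2 ^ j) ^ 2 by rw [← pow_mul, mul_comm, pow_mul]; norm_num]
    exact pow_le_pow_left₀ (by positivity) ((le_div_iff₀ hr).2 ht) 2
  have hexp : exp (-(a * t ^ 2 / r ^ 2)) * exp (t ^ 2) ≤ exp (-(a / 2 * 4 ^ j)) :=
    (exp_neg_mul_sq_div_sq_mul_exp_sq_le t ha hr hr1).trans (exp_le_exp.2 (by nlinarith))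
  have ht0 : 0 ≤ t := le_trans (by positivity) ht
  exact mul_le_mul hexp (pow_le_pow_left₀ ht0 ht' k) (by positivity) (exp_pos _).le

lemma two_mul_pow_mul_exp_neg_sq_mul_le (m : ℕ) (b : ℝ) {P : ℝ} (hP : 0 ≤ P) :
    (2 * P) ^ m * exp (-(4 * P ^ 2) + b * P) * P ≤ exp ((2 * m + b + 1) ^ 2 / 16) := by
  have h2P : (2 * P) ^ m ≤ exp (m * (2 * P)) := by
    rw [exp_nat_mul]
    exact pow_le_pow_left₀ (by positivity) (by linarith [add_one_le_exp (2 * P)]) m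
  calc (2 * P) ^ m * exp (-(4 * P ^ 2) + b * P) * P
      ≤ exp (m * (2 * P)) * exp (-(4 * P ^ 2) + b * P) * exp P := by
        gcongr
        linarith [add_one_le_exp P]
    _ = exp (-(4 * P ^ 2) + (2 * m + b + 1) * P) := by rw [← exp_add, ← exp_add]; ring_nf
    _ ≤ _ := exp_le_exp.2 (by nlinarith [sq_nonneg (4 * P - (2 * m + b + 1) / 2)])

lemma ball_contribution_le {n k : ℕ} {V Λ r : ℝ} (hV : 0 ≤ V) (hΛ : 0 ≤ Λ) (hr : 0 < r)
    (hr1 : r ≤ 1) :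
    r ^ k * (V * r ^ n * exp (Λ * r)) ≤ V * exp Λ * r ^ (n + k) := by
  have : exp (Λ * r) ≤ exp Λ := exp_le_exp.2 (mul_le_of_le_one_right hΛ hr1)
  calc r ^ k * (V * r ^ n * exp (Λ * r)) = V * r ^ (n + k) * exp (Λ * r) := by ring
    _ ≤ V * r ^ (n + k) * exp Λ := by gcongr
    _ = V * exp Λ * r ^ (n + k) := by ring

lemma annulus_contribution_le {n k : ℕ} (j : ℕ) {a V Λ r : ℝ} (ha : 8 ≤ a) (hV : 0 ≤ V) (hΛ : 0 ≤ Λ)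
    (hr : 0 < r) (hr1 : r ≤ 1) :
    exp (-(a / 2 * 4 ^ j)) * (2 ^ (j + 1) * r) ^ k *
        (V * (2 ^ (j + 1) * r) ^ n * exp (Λ * (2 ^ (j + 1) * r))) ≤
      V * exp ((2 * (n + k : ℕ) + 2 * Λ + 1) ^ 2 / 16) * r ^ (n + k) * (1 / 2) ^ j := by
  set P : ℝ := 2 ^ j with hPdef
  have hP : 0 < P := by positivity
  have h4 : (4 : ℝ) ^ j = P ^ 2 := by rw [hPdef, ← pow_mul, mul_comm, pow_mul]; norm_num
  have h2 : (2 : ℝ) ^ (j + 1) = 2 * P := by rw [pow_succ, mul_comm]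
  have hhalf : ((1 : ℝ) / 2) ^ j = P⁻¹ := by rw [one_div, inv_pow]
  have hexp : exp (-(a / 2 * P ^ 2)) * exp (Λ * (2 * P * r)) ≤ exp (-(4 * P ^ 2) + 2 * Λ * P) := by
    rw [← exp_add, exp_le_exp]
    nlinarith [mul_le_of_le_one_right (by positivity : 0 ≤ Λ * (2 * P)) hr1, sq_nonneg P]
  have hkey := two_mul_pow_mul_exp_neg_sq_mul_le (n + k) (2 * Λ) hP.le
  rw [h4, h2, hhalf]
  calc exp (-(a / 2 * P ^ 2)) * (2 * P * r) ^ k * (V * (2 * P * r) ^ n * exp (Λ * (2 * P * r)))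
      = V * r ^ (n + k) * (2 * P) ^ (n + k) *
          (exp (-(a / 2 * P ^ 2)) * exp (Λ * (2 * P * r))) := by ring
    _ ≤ V * r ^ (n + k) * (2 * P) ^ (n + k) * exp (-(4 * P ^ 2) + 2 * Λ * P) := by gcongr
    _ = V * r ^ (n + k) * ((2 * P) ^ (n + k) * exp (-(4 * P ^ 2) + 2 * Λ * P) * P) * P⁻¹ := by
        field_simp
    _ ≤ V * r ^ (n + k) * exp ((2 * (n + k : ℕ) + 2 * Λ + 1) ^ 2 / 16) * P⁻¹ := by gcongr
    _ = _ := by ring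

lemma ofReal_mul_le_ofReal_of_le {x y z : ℝ} {m : ℝ≥0∞} (hx : 0 ≤ x) (hm : m ≤ ENNReal.ofReal y)
    (h : x * y ≤ z) : ENNReal.ofReal x * m ≤ ENNReal.ofReal z :=
  calc ENNReal.ofReal x * m ≤ ENNReal.ofReal x * ENNReal.ofReal y := by gcongr
    _ = ENNReal.ofReal (x * y) := (ENNReal.ofReal_mul hx).symm
    _ ≤ ENNReal.ofReal z := ENNReal.ofReal_le_ofReal h

theorem stmt12_general (n : ℕ) (k : ℕ) (a V Λ : ℝ)
    (ha : 8 ≤ a) (hV : 0 < V) (hΛ : 0 < Λ) :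
    ∃ C' : ℝ, 0 < C' ∧
      ∀ (X : Type) [MetricSpace X] [MeasurableSpace X] (μ : Measure X) (z : X)
        (r : ℝ), 0 < r → r ≤ 1 →
        (∀ ρ : ℝ, 0 < ρ →
          μ (Metric.ball z ρ) ≤ ENNReal.ofReal (V * ρ ^ n * Real.exp (Λ * ρ))) →
        ∫⁻ x, ENNReal.ofReal
            (Real.exp (-(a * dist z x ^ 2 / r ^ 2)) * Real.exp (dist z x ^ 2) *
              dist z x ^ k) ∂μ ≤ ENNReal.ofReal (C' * r ^ (n + k)) := by
  set K : ℝ := (2 * (n + k : ℕ) + 2 * Λ + 1) ^ 2 / 16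
  refine ⟨V * (exp Λ + 2 * exp K), by positivity, fun X _ _ μ z r hr hr1 hμ => ?_⟩
  have ha2 : 2 ≤ a := by linarith
  calc _ ≤ ENNReal.ofReal (r ^ k) * μ (ball z r) + ∑' j : ℕ,
          ENNReal.ofReal (exp (-(a / 2 * 4 ^ j)) * (2 ^ (j + 1) * r) ^ k) *
            μ (ball z (2 ^ (j + 1) * r)) :=
        lintegral_le_ball_add_tsum_annulus μ z hr
          (fun x hx => ENNReal.ofReal_le_ofReal
            (gaussian_weight_le_of_le k ha2 hr hr1 dist_nonneg hx.le))
          (fun j x hx hx' => ENNReal.ofReal_le_ofReal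
            (gaussian_weight_le_of_mem_annulus k j ha2 hr hr1 hx hx'.le))
    _ ≤ ENNReal.ofReal (V * exp Λ * r ^ (n + k)) +
          ∑' j : ℕ, ENNReal.ofReal (V * exp K * r ^ (n + k) * (1 / 2) ^ j) := by
        refine add_le_add ?_ (ENNReal.tsum_le_tsum fun j => ?_)
        · exact ofReal_mul_le_ofReal_of_le (by positivity) (hμ r hr)
            (ball_contribution_le hV.le hΛ.le hr hr1)
        · exact ofReal_mul_le_ofReal_of_le (by positivity) (hμ _ (by positivity))
            (annulus_contribution_le j ha hV.le hΛ.le hr hr1)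
    _ = ENNReal.ofReal (V * (exp Λ + 2 * exp K) * r ^ (n + k)) := by
        rw [← ENNReal.ofReal_tsum_of_nonneg (fun j => by positivity)
            (summable_geometric_two.mul_left _), tsum_mul_left, tsum_geometric_two,
          ← ENNReal.ofReal_add (by positivity) (by positivity)]
        ring_nf

/-- Weighted Gaussian integral estimate: if `μ(B(z,ρ)) ≤ V ρⁿ e^{Λρ}` for all `ρ > 0`,
then for every `a ≥ 8`, `k ∈ {0,1,2}` and `r ∈ (0,1]`,
`∫ exp(-a d(z,x)²/r²) e^{d(z,x)²} d(z,x)^k dμ(x) ≤ C' r^{n+k}`,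
where `C'` depends only on `n, k, a, V, Λ`. -/
theorem stmt12 (n : ℕ) (hn : 1 ≤ n) (k : ℕ) (hk : k ≤ 2) (a V Λ : ℝ)
    (ha : 8 ≤ a) (hV : 0 < V) (hΛ : 0 < Λ) :
    ∃ C' : ℝ, 0 < C' ∧
      ∀ (X : Type) [MetricSpace X] [MeasurableSpace X] (μ : Measure X) (z : X)
        (r : ℝ), 0 < r → r ≤ 1 →
        (∀ ρ : ℝ, 0 < ρ →
          μ (Metric.ball z ρ) ≤ ENNReal.ofReal (V * ρ ^ n * Real.exp (Λ * ρ))) →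
        ∫⁻ x, ENNReal.ofReal
            (Real.exp (-(a * dist z x ^ 2 / r ^ 2)) * Real.exp (dist z x ^ 2) *
              dist z x ^ k) ∂μ ≤ ENNReal.ofReal (C' * r ^ (n + k)) :=
  stmt12_general n k a V Λ ha hV hΛ
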